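/- For every x with 0 < x < 1.371, (π² − 4x²)·tan x < x·(π² − (4 − π²/3)x² − (4/3 − 2π²/15)x⁴). -/

import Mathlib

/-!
Write `tan x = sin x / cos x` and clear the positive denominator `cos x`. The Taylor
polynomials of `sin` and `cos` alternately over- and underestimate them on `[0, ∞)` (integrate
the previous bound once), so it suffices to replace `sin x` by its degree-9 upper bound and
`cos x` by its degree-10 lower bound. The resulting polynomial inequality has the form
`0 < x ^ 7 * (π ^ 2 * A (x ^ 2) + B (x ^ 2))` with `A ≤ 0`, so it only needs an upper bound
on `π` and is checked on `0 ≤ x ^ 2 < 1.88`.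
-/

open Real Finset

noncomputable def sinTaylor (n : ℕ) (x : ℝ) : ℝ :=
  ∑ k ∈ range n, (-1) ^ k * x ^ (2 * k + 1) / (2 * k + 1).factorial

noncomputable def cosTaylor (n : ℕ) (x : ℝ) : ℝ :=
  ∑ k ∈ range n, (-1) ^ k * x ^ (2 * k) / (2 * k).factorial

theorem sinTaylor_zero_right (n : ℕ) : sinTaylor n 0 = 0 := by
  simp [sinTaylor]

theorem cosTaylor_succ_zero_right (n : ℕ) : cosTaylor (n + 1) 0 = 1 := by
  simp [cosTaylor, sum_range_succ']

theorem hasDerivAt_sinTaylor (n : ℕ) (x : ℝ) : HasDerivAt (sinTaylor n) (cosTaylor n x) x := by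
  unfold sinTaylor cosTaylor
  refine HasDerivAt.fun_sum fun k _ => ?_
  refine (((hasDerivAt_pow (2 * k + 1) x).const_mul ((-1 : ℝ) ^ k)).div_const
    ((2 * k + 1).factorial : ℝ)).congr_deriv ?_
  rw [Nat.factorial_succ]
  push_cast
  field_simp

theorem hasDerivAt_cosTaylor_succ (n : ℕ) (x : ℝ) :
    HasDerivAt (cosTaylor (n + 1)) (-sinTaylor n x) x := by
  have h : cosTaylor (n + 1) =
      fun y => ∑ k ∈ range n, (-1 : ℝ) ^ (k + 1) * y ^ (2 * k + 2) / (2 * k + 2).factorial + 1 := by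
    funext y
    simp [cosTaylor, sum_range_succ', mul_add]
  rw [h, sinTaylor, ← sum_neg_distrib]
  refine (HasDerivAt.fun_sum fun k _ => ?_).add_const 1
  refine (((hasDerivAt_pow (2 * k + 2) x).const_mul ((-1 : ℝ) ^ (k + 1))).div_const
    ((2 * k + 2).factorial : ℝ)).congr_deriv ?_
  rw [Nat.factorial_succ]
  push_cast
  field_simp
  ring

theorem nonneg_of_hasDerivAt_nonneg {f f' : ℝ → ℝ} (hf : ∀ y, HasDerivAt f (f' y) y)
    (hf' : ∀ y, 0 ≤ y → 0 ≤ f' y) (hf0 : f 0 = 0) {x : ℝ} (hx : 0 ≤ x) : 0 ≤ f x := by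
  have hmono : MonotoneOn f (Set.Ici 0) :=
    monotoneOn_of_hasDerivWithinAt_nonneg (convex_Ici 0)
      (fun y _ => (hf y).continuousAt.continuousWithinAt)
      (fun y _ => (hf y).hasDerivWithinAt)
      (fun y hy => hf' y (interior_subset hy))
  simpa [hf0] using hmono Set.self_mem_Ici hx hx

theorem sinTaylor_sub_sin_alternating {n : ℕ}
    (hcos : ∀ y, 0 ≤ y → 0 ≤ (-1) ^ n * (cosTaylor (n + 1) y - cos y)) {x : ℝ} (hx : 0 ≤ x) :
    0 ≤ (-1) ^ n * (sinTaylor (n + 1) x - sin x) :=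
  nonneg_of_hasDerivAt_nonneg
    (fun y => ((hasDerivAt_sinTaylor (n + 1) y).sub (hasDerivAt_sin y)).const_mul _) hcos
    (by simp [sinTaylor_zero_right]) hx

theorem cosTaylor_sub_cos_alternating {n : ℕ}
    (hsin : ∀ y, 0 ≤ y → 0 ≤ (-1) ^ n * (sinTaylor (n + 1) y - sin y)) {x : ℝ} (hx : 0 ≤ x) :
    0 ≤ (-1) ^ (n + 1) * (cosTaylor (n + 2) x - cos x) := by
  refine nonneg_of_hasDerivAt_nonneg
    (fun y => ((hasDerivAt_cosTaylor_succ (n + 1) y).sub (hasDerivAt_cos y)).const_mul _)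
    (fun y hy => ?_) (by simp [cosTaylor_succ_zero_right]) hx
  convert hsin y hy using 1
  ring

theorem cosTaylor_sinTaylor_alternating (n : ℕ) {x : ℝ} (hx : 0 ≤ x) :
    0 ≤ (-1) ^ n * (cosTaylor (n + 1) x - cos x) ∧
      0 ≤ (-1) ^ n * (sinTaylor (n + 1) x - sin x) := by
  induction n generalizing x with
  | zero =>
    have hcos : ∀ y, 0 ≤ y → 0 ≤ (-1) ^ 0 * (cosTaylor 1 y - cos y) := fun y _ => by
      simpa [cosTaylor] using cos_le_one y
    exact ⟨hcos x hx, sinTaylor_sub_sin_alternating hcos hx⟩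
  | succ n ih =>
    have hcos : ∀ y, 0 ≤ y → 0 ≤ (-1) ^ (n + 1) * (cosTaylor (n + 2) y - cos y) :=
      fun y hy => cosTaylor_sub_cos_alternating (fun z hz => (ih hz).2) hy
    exact ⟨hcos x hx, sinTaylor_sub_sin_alternating hcos hx⟩

theorem sin_le_sinTaylor_five {x : ℝ} (hx : 0 ≤ x) :
    sin x ≤ x - x ^ 3 / 6 + x ^ 5 / 120 - x ^ 7 / 5040 + x ^ 9 / 362880 := by
  have h := (cosTaylor_sinTaylor_alternating 4 hx).2
  simp [sinTaylor, sum_range_succ, Nat.factorial] at h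
  linarith

theorem cosTaylor_six_le_cos {x : ℝ} (hx : 0 ≤ x) :
    1 - x ^ 2 / 2 + x ^ 4 / 24 - x ^ 6 / 720 + x ^ 8 / 40320 - x ^ 10 / 3628800 ≤ cos x := by
  have h := (cosTaylor_sinTaylor_alternating 5 hx).1
  simp [cosTaylor, sum_range_succ, Nat.factorial] at h
  linarith

theorem taylor_certificate_pos {t p : ℝ} (ht0 : 0 ≤ t) (ht : t < 1.88)
    (hp : p ≤ 3.141593 ^ 2) :
    0 < p * (-(17 / 315) + 29 / 5670 * t - 643 / 3628800 * t ^ 2 + 1 / 311040 * t ^ 3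
        - 1 / 27216000 * t ^ 4)
      + (8 / 15 - 16 / 315 * t + 1 / 567 * t ^ 2 - 29 / 907200 * t ^ 3 + 1 / 2721600 * t ^ 4) := by
  have hA : -(17 / 315) + 29 / 5670 * t - 643 / 3628800 * t ^ 2 + 1 / 311040 * t ^ 3
      - 1 / 27216000 * t ^ 4 ≤ 0 := by
    nlinarith [sq_nonneg t, sq_nonneg (t ^ 2), pow_nonneg ht0 3, mul_le_mul_of_nonneg_left ht.le ht0]
  nlinarith [mul_le_mul_of_nonpos_right hp hA, sq_nonneg t, sq_nonneg (t ^ 2),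
    mul_le_mul_of_nonneg_left ht.le ht0,
    mul_le_mul_of_nonneg_left (mul_le_mul_of_nonneg_left ht.le ht0) ht0,
    pow_nonneg ht0 3, pow_nonneg ht0 4]

theorem stmt18 (x : ℝ) (h0 : 0 < x) (h1 : x < 1.371) :
    (π ^ 2 - 4 * x ^ 2) * Real.tan x <
      x * (π ^ 2 - (4 - π ^ 2 / 3) * x ^ 2 - (4 / 3 - 2 * π ^ 2 / 15) * x ^ 4) := by
  have hx2 : x ^ 2 < 1.88 := by nlinarith
  have hpi3 : 9 < π ^ 2 := by nlinarith [pi_gt_three]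
  have hpi : π ^ 2 ≤ 3.141593 ^ 2 := pow_le_pow_left₀ pi_pos.le pi_lt_d6.le 2
  have hcos : 0 < cos x := cos_pos_of_mem_Ioo ⟨by linarith [pi_pos], by linarith [pi_gt_d2]⟩
  have hq : 0 ≤ π ^ 2 - 4 * x ^ 2 := by nlinarith
  have hR : 0 ≤ x * (π ^ 2 - (4 - π ^ 2 / 3) * x ^ 2 - (4 / 3 - 2 * π ^ 2 / 15) * x ^ 4) := by
    refine mul_nonneg h0.le ?_
    nlinarith [mul_le_mul_of_nonneg_right hpi3.le
      (by positivity : (0 : ℝ) ≤ 1 + x ^ 2 / 3 + 2 * (x ^ 2) ^ 2 / 15)]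
  rw [tan_eq_sin_div_cos, ← mul_div_assoc, div_lt_iff₀ hcos]
  calc (π ^ 2 - 4 * x ^ 2) * sin x
      ≤ (π ^ 2 - 4 * x ^ 2) * (x - x ^ 3 / 6 + x ^ 5 / 120 - x ^ 7 / 5040 + x ^ 9 / 362880) :=
        mul_le_mul_of_nonneg_left (sin_le_sinTaylor_five h0.le) hq
    _ < x * (π ^ 2 - (4 - π ^ 2 / 3) * x ^ 2 - (4 / 3 - 2 * π ^ 2 / 15) * x ^ 4) *
        (1 - x ^ 2 / 2 + x ^ 4 / 24 - x ^ 6 / 720 + x ^ 8 / 40320 - x ^ 10 / 3628800) := by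
      -- `x * (π ^ 2 - …) = (π ^ 2 - 4 * x ^ 2) * (x + x ^ 3 / 3 + 2 * x ^ 5 / 15) + 8 * x ^ 7 / 15`
      -- and `x + x ^ 3 / 3 + 2 * x ^ 5 / 15` is the Taylor polynomial of `tan`, so the two
      -- sides agree up to `O(x ^ 7)`.
      have hcert := mul_pos (pow_pos h0 7) (taylor_certificate_pos (sq_nonneg x) hx2 hpi)
      linear_combination hcert
    _ ≤ _ := mul_le_mul_of_nonneg_left (cosTaylor_six_le_cos h0.le) hR
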